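/- arXiv:2409.19002 — 2 statements merged into one kernel-verified Lean document; each statement's English description precedes it below -/
import Mathlib

section
/- Let H be a Hilbert space and P_0, ..., P_n ∈ L(H) be self-adjoint projections with P_i P_j = 0 for i ≠ j and ∑_{i=0}^n P_i = 1. Then for any bounded operator F on H, ‖∑_{i=0}^{n-1} P_i F P_{i+1}‖ ≤ ‖F‖. -/
/-!
Write `S = ∑ₖ P_{f k} F P_{g k}` with `f`, `g` injective. For a vector `x`, the summands
`P_{f k} F P_{g k} x` lie in the mutually orthogonal ranges of the `P_{f k}`, so by Pythagoras
`‖S x‖² = ∑ₖ ‖P_{f k} F P_{g k} x‖² ≤ ‖F‖² ∑ₖ ‖P_{g k} x‖² ≤ ‖F‖² ∑ⱼ ‖P_j x‖² = ‖F‖² ‖x‖²`,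
the last step being Pythagoras again for `x = ∑ⱼ P_j x`.
-/

open ContinuousLinearMap
open scoped InnerProductSpace

section

variable {𝕜 E : Type*} [RCLike 𝕜] [NormedAddCommGroup E] [InnerProductSpace 𝕜 E]

theorem norm_sum_sq_eq_sum_norm_sq_of_pairwise_inner_eq_zero {ι : Type*} (s : Finset ι)
    (v : ι → E) (h : (s : Set ι).Pairwise fun i j => ⟪v i, v j⟫_𝕜 = 0) :
    ‖∑ i ∈ s, v i‖ ^ 2 = ∑ i ∈ s, ‖v i‖ ^ 2 := by
  classical
  induction s using Finset.induction_on with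
  | empty => simp
  | insert a s ha ih =>
    have h_orth : ⟪v a, ∑ i ∈ s, v i⟫_𝕜 = 0 := by
      rw [inner_sum]
      exact Finset.sum_eq_zero fun j hj =>
        h (Finset.mem_insert_self a s) (Finset.mem_insert_of_mem hj)
          (ne_of_mem_of_not_mem hj ha).symm
    rw [Finset.sum_insert ha, Finset.sum_insert ha, @norm_add_sq 𝕜, h_orth,
      ih (h.mono (by simp)), map_zero, mul_zero, add_zero]

variable [CompleteSpace E]

theorem IsSelfAdjoint.inner_apply_apply_eq_zero_of_comp_eq_zero {P Q : E →L[𝕜] E}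
    (hP : IsSelfAdjoint P) (hPQ : P ∘L Q = 0) (x y : E) : ⟪P x, Q y⟫_𝕜 = 0 := by
  calc ⟪P x, Q y⟫_𝕜 = ⟪x, P (Q y)⟫_𝕜 := hP.isSymmetric x (Q y)
    _ = 0 := by rw [← comp_apply, hPQ, zero_apply, inner_zero_right]

theorem IsStarProjection.norm_apply_le {P : E →L[𝕜] E} (hP : IsStarProjection P) (x : E) :
    ‖P x‖ ≤ ‖x‖ := by
  simpa using P.le_of_opNorm_le (IsStarProjection.norm_le P hP) x

variable {ι : Type*} [Fintype ι] {P : ι → E →L[𝕜] E}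

theorem sum_norm_sq_apply_eq_norm_sq (hsa : ∀ i, IsSelfAdjoint (P i))
    (horth : Pairwise fun i j => P i ∘L P j = 0) (hsum : ∑ i, P i = 1) (x : E) :
    ∑ i, ‖P i x‖ ^ 2 = ‖x‖ ^ 2 := by
  have hx : ∑ i, P i x = x := by rw [← sum_apply, hsum, one_apply_eq_self]
  rw [← norm_sum_sq_eq_sum_norm_sq_of_pairwise_inner_eq_zero _ _ fun i _ j _ hij =>
    (hsa i).inner_apply_apply_eq_zero_of_comp_eq_zero (horth hij) x x, hx]

theorem norm_sum_comp_comp_le {κ : Type*} [Fintype κ] (hP : ∀ i, IsStarProjection (P i))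
    (horth : Pairwise fun i j => P i ∘L P j = 0) (hsum : ∑ i, P i = 1)
    {f g : κ → ι} (hf : f.Injective) (hg : g.Injective) (F : E →L[𝕜] E) :
    ‖∑ k, P (f k) ∘L F ∘L P (g k)‖ ≤ ‖F‖ := by
  refine opNorm_le_bound _ (norm_nonneg F) fun x => ?_
  have h_pyth : ‖∑ k, P (f k) (F (P (g k) x))‖ ^ 2 = ∑ k, ‖P (f k) (F (P (g k) x))‖ ^ 2 :=
    norm_sum_sq_eq_sum_norm_sq_of_pairwise_inner_eq_zero _ _ fun k _ l _ hkl =>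
      (hP _).isSelfAdjoint.inner_apply_apply_eq_zero_of_comp_eq_zero (horth (hf.ne hkl)) _ _
  have h_bessel : ∑ k, ‖P (g k) x‖ ^ 2 ≤ ‖x‖ ^ 2 := by
    rw [← sum_norm_sq_apply_eq_norm_sq (fun i => (hP i).isSelfAdjoint) horth hsum x]
    calc ∑ k, ‖P (g k) x‖ ^ 2 = ∑ i ∈ Finset.univ.map ⟨g, hg⟩, ‖P i x‖ ^ 2 :=
          by rw [Finset.sum_map]; rfl
      _ ≤ _ := Finset.sum_le_univ_sum_of_nonneg fun _ => sq_nonneg _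
  refine le_of_sq_le_sq ?_ (by positivity)
  calc ‖(∑ k, P (f k) ∘L F ∘L P (g k)) x‖ ^ 2
      = ∑ k, ‖P (f k) (F (P (g k) x))‖ ^ 2 := by simpa [sum_apply] using h_pyth
    _ ≤ ∑ k, (‖F‖ * ‖P (g k) x‖) ^ 2 := by
      gcongr with k
      exact ((hP _).norm_apply_le _).trans (F.le_opNorm _)
    _ = ‖F‖ ^ 2 * ∑ k, ‖P (g k) x‖ ^ 2 := by simp only [mul_pow, Finset.mul_sum]
    _ ≤ (‖F‖ * ‖x‖) ^ 2 := by rw [mul_pow]; gcongr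

end

/-- If `P₀, …, Pₙ` are mutually orthogonal self-adjoint projections on a Hilbert
space summing to the identity, then `‖∑_{i=0}^{n-1} Pᵢ F P_{i+1}‖ ≤ ‖F‖` for any
bounded operator `F`. -/
theorem stmt1 {H : Type*} [NormedAddCommGroup H] [InnerProductSpace ℂ H] [CompleteSpace H]
    (n : ℕ) (P : Fin (n + 1) → H →L[ℂ] H)
    (hsa : ∀ i, IsSelfAdjoint (P i))
    (hidem : ∀ i, P i ∘L P i = P i)
    (horth : ∀ i j, i ≠ j → P i ∘L P j = 0)
    (hsum : ∑ i, P i = 1)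
    (F : H →L[ℂ] H) :
    ‖∑ i : Fin n, P i.castSucc ∘L F ∘L P i.succ‖ ≤ ‖F‖ :=
  norm_sum_comp_comp_le (fun i => ⟨hidem i, hsa i⟩) horth hsum
    (Fin.castSucc_injective n) (Fin.succ_injective n) F
end

section
/- Let K ⊆ ℝⁿ be compact, σ : K × ℝⁿ → ℂ be bounded, continuous in x ∈ K uniformly in ξ, differentiable in ξ with ‖d_ξ σ(x,ξ)‖ ≤ C (1 + ‖ξ‖)^{-1} for all (x,ξ), and let x ↦ ψ_x be a norm-continuous family of invertible linear maps of ℝⁿ. Then (x,ξ) ↦ σ(x, ψ_x(ξ)) is continuous in x uniformly in ξ, and satisfies a bound ‖d_ξ σ(x, ψ_x(ξ))‖ ≤ C' (1 + ‖ξ‖)^{-1} for some constant C'. -/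
/-- Lemma 6.1 (Kasparov): a change of trivialization by a norm-continuous family of
invertible linear maps preserves the symbol conditions: uniform continuity in `x`
(uniformly in `ξ`) and the derivative bound `‖d_ξ σ‖ ≤ C (1+‖ξ‖)⁻¹`. -/
theorem stmt12 {n : ℕ} (K : Set (EuclideanSpace ℝ (Fin n))) (hK : IsCompact K)
    (σ : EuclideanSpace ℝ (Fin n) → EuclideanSpace ℝ (Fin n) → ℂ) (C : ℝ)
    (hbdd : ∃ M, ∀ x ∈ K, ∀ ξ, ‖σ x ξ‖ ≤ M)
    (hucont : ∀ ε > (0 : ℝ), ∃ δ > (0 : ℝ), ∀ x ∈ K, ∀ y ∈ K,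
      dist x y < δ → ∀ ξ, ‖σ x ξ - σ y ξ‖ < ε)
    (hdiff : ∀ x ∈ K, Differentiable ℝ (σ x))
    (hderiv : ∀ x ∈ K, ∀ ξ, ‖fderiv ℝ (σ x) ξ‖ ≤ C * (1 + ‖ξ‖)⁻¹)
    (ψ : EuclideanSpace ℝ (Fin n) →
      (EuclideanSpace ℝ (Fin n) →L[ℝ] EuclideanSpace ℝ (Fin n)))
    (hψcont : ContinuousOn ψ K)
    (hψinv : ∀ x ∈ K, IsUnit (ψ x)) :
    (∀ ε > (0 : ℝ), ∃ δ > (0 : ℝ), ∀ x ∈ K, ∀ y ∈ K,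
      dist x y < δ → ∀ ξ, ‖σ x (ψ x ξ) - σ y (ψ y ξ)‖ < ε) ∧
    ∃ C' : ℝ, ∀ x ∈ K, ∀ ξ,
      ‖fderiv ℝ (fun ζ => σ x (ψ x ζ)) ξ‖ ≤ C' * (1 + ‖ξ‖)⁻¹ := by
  rcases K.eq_empty_or_nonempty with hKe | ⟨x₀, hx₀⟩
  · subst hKe
    exact ⟨fun ε hε => ⟨1, one_pos, fun x hx => absurd hx (Set.notMem_empty x)⟩,
      0, fun x hx => absurd hx (Set.notMem_empty x)⟩
  -- `C ≥ 0`
  have hC : 0 ≤ C := by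
    have h1 := hderiv x₀ hx₀ 0
    have h0 : (0:ℝ) ≤ ‖fderiv ℝ (σ x₀) 0‖ := norm_nonneg _
    simp only [norm_zero, add_zero, inv_one, mul_one] at h1
    linarith
  -- uniform bound on `‖ψ x‖`
  obtain ⟨A, hA⟩ := hK.exists_bound_of_continuousOn hψcont
  have hA0 : 0 ≤ A := le_trans (norm_nonneg _) (hA x₀ hx₀)
  -- uniform bound on the inverses
  have hinvcont : ContinuousOn (fun x => Ring.inverse (ψ x)) K := by
    intro x hx
    have hCA : ContinuousAt Ring.inverse (ψ x) := by
      have := NormedRing.inverse_continuousAt (hψinv x hx).unit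
      rwa [IsUnit.unit_spec] at this
    exact hCA.comp_continuousWithinAt (hψcont x hx)
  obtain ⟨B₀, hB₀⟩ := hK.exists_bound_of_continuousOn hinvcont
  set B := max B₀ 1 with hBdef
  have hB1 : (1:ℝ) ≤ B := le_max_right _ _
  have hB0 : (0:ℝ) < B := lt_of_lt_of_le one_pos hB1
  have hBinv : ∀ x ∈ K, ∀ ξ, ‖ξ‖ ≤ B * ‖ψ x ξ‖ := by
    intro x hx ξ
    have hco : (Ring.inverse (ψ x)) (ψ x ξ) = ξ := by
      have h1 := Ring.inverse_mul_cancel (ψ x) (hψinv x hx)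
      have h2 := congrArg (fun f => f ξ) h1
      simpa [ContinuousLinearMap.mul_apply] using h2
    calc ‖ξ‖ = ‖(Ring.inverse (ψ x)) (ψ x ξ)‖ := by rw [hco]
      _ ≤ ‖Ring.inverse (ψ x)‖ * ‖ψ x ξ‖ := (Ring.inverse (ψ x)).le_opNorm _
      _ ≤ B * ‖ψ x ξ‖ := by
          apply mul_le_mul_of_nonneg_right _ (norm_nonneg _)
          exact le_trans (hB₀ x hx) (le_max_left _ _)
  -- the key mean-value estimate
  have hkey : ∀ x ∈ K, ∀ y ∈ K, ∀ ξ, ‖ψ x - ψ y‖ ≤ (2*B)⁻¹ →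
      ‖σ x (ψ x ξ) - σ x (ψ y ξ)‖ ≤ C * (2*B) * ‖ψ x - ψ y‖ := by
    intro x hx y hy ξ hsmall
    have hdiffx := hdiff x hx
    set p := ψ y ξ with hp
    set q := ψ x ξ with hq
    have hqp : ‖q - p‖ ≤ ‖ψ x - ψ y‖ * ‖ξ‖ := by
      have : q - p = (ψ x - ψ y) ξ := by simp [hp, hq]
      rw [this]
      exact (ψ x - ψ y).le_opNorm ξ
    have hqp' : ‖q - p‖ ≤ (2*B)⁻¹ * ‖ξ‖ :=
      le_trans hqp (mul_le_mul_of_nonneg_right hsmall (norm_nonneg _))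
    -- lower bound for points on the segment
    have hseg : ∀ η ∈ segment ℝ p q, ‖ξ‖ / (2*B) ≤ ‖η‖ := by
      intro η hη
      obtain ⟨a, b, ha, hb, hab, rfl⟩ := hη
      have hae : a = 1 - b := by linarith
      have hdiffη : a • p + b • q - p = b • (q - p) := by rw [hae]; module
      have h1 : ‖a • p + b • q - p‖ ≤ ‖q - p‖ := by
        rw [hdiffη, norm_smul, Real.norm_eq_abs, abs_of_nonneg hb]
        have hb1 : b ≤ 1 := by linarith
        nlinarith [norm_nonneg (q - p)]
      have h2 : ‖p‖ ≤ ‖a • p + b • q‖ + ‖a • p + b • q - p‖ := by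
        have := norm_sub_le (a • p + b • q) (a • p + b • q - p)
        simpa using this
      have h3 : ‖ξ‖ ≤ B * ‖p‖ := hBinv y hy ξ
      have h3' : ‖ξ‖ / B ≤ ‖p‖ := (div_le_iff₀ hB0).2 (by linarith)
      have h4 : ‖q - p‖ ≤ ‖ξ‖ / (2*B) := by
        rw [div_eq_inv_mul]; exact hqp'
      have h5 : ‖ξ‖ / B - ‖ξ‖ / (2*B) = ‖ξ‖ / (2*B) := by
        field_simp; ring
      linarith
    -- mean value inequality with constant `D`
    set D := C * (1 + ‖ξ‖ / (2*B))⁻¹ with hD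
    have hbound : ∀ η ∈ segment ℝ p q, ‖fderiv ℝ (σ x) η‖ ≤ D := by
      intro η hη
      refine le_trans (hderiv x hx η) ?_
      rw [hD]
      refine mul_le_mul_of_nonneg_left ?_ hC
      have h6 := hseg η hη
      have h7 : (0:ℝ) < 1 + ‖ξ‖ / (2*B) := by positivity
      apply inv_anti₀ h7
      linarith
    have hmv : ‖σ x q - σ x p‖ ≤ D * ‖q - p‖ :=
      Convex.norm_image_sub_le_of_norm_hasFDerivWithin_le
        (fun η _ => ((hdiffx η).hasFDerivAt).hasFDerivWithinAt)
        hbound (convex_segment p q) (left_mem_segment ℝ p q) (right_mem_segment ℝ p q)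
    have hDle : D * ‖q - p‖ ≤ C * (2*B) * ‖ψ x - ψ y‖ := by
      have h5 : D * ‖q - p‖ ≤ D * (‖ψ x - ψ y‖ * ‖ξ‖) := by
        apply mul_le_mul_of_nonneg_left hqp
        rw [hD]; positivity
      refine le_trans h5 ?_
      have hkey2 : (1 + ‖ξ‖ / (2*B))⁻¹ * ‖ξ‖ ≤ 2*B := by
        rw [inv_mul_le_iff₀ (by positivity)]
        have h6 : (1 + ‖ξ‖ / (2*B)) * (2*B) = 2*B + ‖ξ‖ := by
          field_simp
        rw [h6]
        linarith [norm_nonneg ξ]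
      calc D * (‖ψ x - ψ y‖ * ‖ξ‖)
          = C * ((1 + ‖ξ‖ / (2*B))⁻¹ * ‖ξ‖) * ‖ψ x - ψ y‖ := by rw [hD]; ring
        _ ≤ C * (2*B) * ‖ψ x - ψ y‖ := by
            apply mul_le_mul_of_nonneg_right _ (norm_nonneg _)
            exact mul_le_mul_of_nonneg_left hkey2 hC
    exact le_trans hmv hDle
  constructor
  · -- uniform continuity part
    intro ε hε
    obtain ⟨δ₁, hδ₁, h₁⟩ := hucont (ε/2) (by linarith)
    have hψuc := hK.uniformContinuousOn_of_continuous hψcont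
    set r := min ((2*B)⁻¹) (ε / (2*(C*(2*B)+1))) with hr
    have hr0 : 0 < r := by
      apply lt_min (by positivity)
      have : 0 < C*(2*B)+1 := by positivity
      positivity
    obtain ⟨δ₂, hδ₂, h₂⟩ := Metric.uniformContinuousOn_iff.1 hψuc r hr0
    refine ⟨min δ₁ δ₂, lt_min hδ₁ hδ₂, fun x hx y hy hxy ξ => ?_⟩
    have hd1 : dist x y < δ₁ := lt_of_lt_of_le hxy (min_le_left _ _)
    have hd2 : dist x y < δ₂ := lt_of_lt_of_le hxy (min_le_right _ _)
    have hψr : ‖ψ x - ψ y‖ < r := by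
      have := h₂ x hx y hy hd2
      rwa [dist_eq_norm] at this
    have hψsmall : ‖ψ x - ψ y‖ ≤ (2*B)⁻¹ :=
      le_trans hψr.le (min_le_left _ _)
    have hterm1 : ‖σ x (ψ x ξ) - σ x (ψ y ξ)‖ ≤ C * (2*B) * ‖ψ x - ψ y‖ :=
      hkey x hx y hy ξ hψsmall
    have hterm2 : ‖σ x (ψ y ξ) - σ y (ψ y ξ)‖ < ε/2 := h₁ x hx y hy hd1 (ψ y ξ)
    have htri : ‖σ x (ψ x ξ) - σ y (ψ y ξ)‖ ≤
        ‖σ x (ψ x ξ) - σ x (ψ y ξ)‖ + ‖σ x (ψ y ξ) - σ y (ψ y ξ)‖ := by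
      have := norm_sub_le_norm_sub_add_norm_sub (σ x (ψ x ξ)) (σ x (ψ y ξ)) (σ y (ψ y ξ))
      simpa using this
    have hsmallr : C * (2*B) * ‖ψ x - ψ y‖ ≤ ε/2 := by
      have hrle : r ≤ ε / (2*(C*(2*B)+1)) := min_le_right _ _
      have hpos : (0:ℝ) < C*(2*B)+1 := by positivity
      have h7 : C * (2*B) * ‖ψ x - ψ y‖ ≤ (C*(2*B)+1) * r := by
        have := hψr.le
        nlinarith [norm_nonneg (ψ x - ψ y)]
      have h8 : (C*(2*B)+1) * r ≤ (C*(2*B)+1) * (ε / (2*(C*(2*B)+1))) :=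
        mul_le_mul_of_nonneg_left hrle hpos.le
      have h9 : (C*(2*B)+1) * (ε / (2*(C*(2*B)+1))) = ε/2 := by
        field_simp
      linarith
    linarith
  · -- derivative bound part
    refine ⟨C * A * B, fun x hx ξ => ?_⟩
    have hcomp : fderiv ℝ (fun ζ => σ x (ψ x ζ)) ξ =
        (fderiv ℝ (σ x) (ψ x ξ)).comp (ψ x) := by
      have h1 : fderiv ℝ ((σ x) ∘ (ψ x)) ξ =
          (fderiv ℝ (σ x) (ψ x ξ)).comp (fderiv ℝ (ψ x) ξ) :=
        fderiv_comp ξ (hdiff x hx (ψ x ξ)) ((ψ x).differentiableAt)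
      rw [(ψ x).fderiv] at h1
      exact h1
    rw [hcomp]
    have h2 : ‖(fderiv ℝ (σ x) (ψ x ξ)).comp (ψ x)‖ ≤
        ‖fderiv ℝ (σ x) (ψ x ξ)‖ * ‖ψ x‖ :=
      ContinuousLinearMap.opNorm_comp_le _ _
    have h3 : ‖fderiv ℝ (σ x) (ψ x ξ)‖ ≤ C * (1 + ‖ψ x ξ‖)⁻¹ := hderiv x hx _
    have hp1 : (0:ℝ) < 1 + ‖ψ x ξ‖ := by positivity
    have hp2 : (0:ℝ) < 1 + ‖ξ‖ := by positivity
    have h4 : (1 + ‖ψ x ξ‖)⁻¹ * (1 + ‖ξ‖) ≤ B := by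
      rw [inv_mul_le_iff₀ hp1]
      nlinarith [hBinv x hx ξ, norm_nonneg (ψ x ξ)]
    have h4' : (1 + ‖ψ x ξ‖)⁻¹ ≤ B * (1 + ‖ξ‖)⁻¹ := by
      have h5 := mul_le_mul_of_nonneg_right h4 (inv_nonneg.2 hp2.le)
      rwa [mul_assoc, mul_inv_cancel₀ hp2.ne', mul_one] at h5
    calc ‖(fderiv ℝ (σ x) (ψ x ξ)).comp (ψ x)‖
        ≤ ‖fderiv ℝ (σ x) (ψ x ξ)‖ * ‖ψ x‖ := h2
      _ ≤ (C * (B * (1 + ‖ξ‖)⁻¹)) * A := by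
          apply mul_le_mul _ (hA x hx) (norm_nonneg _) (by positivity)
          exact le_trans h3 (mul_le_mul_of_nonneg_left h4' hC)
      _ = C * A * B * (1 + ‖ξ‖)⁻¹ := by ring
end
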